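/- Let n > 2. The total chromatic number of the Cayley graph on the symmetric group S_n with respect to the generating set T_m = {(1 2), (1 3), ..., (1 n)} equals n. (Since the graph is (n-1)-regular, this says the graph is type I: χ'' = Δ + 1.) -/

import Mathlib

/-- The Cayley graph of a group `G` with respect to a connection set `S`.
For a symmetric `S` not containing the identity, `x` and `y` are adjacent
iff `x⁻¹ * y ∈ S`. -/
def cayley {G : Type*} [Group G] (S : Set G) : SimpleGraph G where
  Adj x y := x ≠ y ∧ (x⁻¹ * y ∈ S ∨ y⁻¹ * x ∈ S)
  symm := ⟨fun _ _ h => ⟨h.1.symm, h.2.symm⟩⟩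
  loopless := ⟨fun _ h => h.1 rfl⟩

/-- The generating set `T_m = {(1 2), (1 3), …, (1 n)}` of transpositions
moving the first symbol (written `0`-indexed, so the symbol `1` is `0 : Fin n`). -/
def Tm (n : ℕ) (hn : 0 < n) : Set (Equiv.Perm (Fin n)) :=
  {σ | ∃ k : Fin n, k ≠ ⟨0, hn⟩ ∧ σ = Equiv.swap ⟨0, hn⟩ k}

/-- A total coloring of `G` with `m` colors: every vertex and every edge receives one of
`m` colors so that adjacent vertices differ, each edge differs from its endpoints, and
edges sharing an endpoint differ. -/
def HasTotalColoring {V : Type*} (G : SimpleGraph V) (m : ℕ) : Prop :=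
  ∃ (cv : V → Fin m) (ce : Sym2 V → Fin m),
    (∀ ⦃x y : V⦄, G.Adj x y → cv x ≠ cv y) ∧
    (∀ e ∈ G.edgeSet, ∀ v ∈ e, ce e ≠ cv v) ∧
    (∀ e ∈ G.edgeSet, ∀ f ∈ G.edgeSet, e ≠ f → (∃ v, v ∈ e ∧ v ∈ f) → ce e ≠ ce f)

/-- The total chromatic number: the least `m` admitting a total coloring with `m` colors. -/
noncomputable def totalChromaticNumber {V : Type*} (G : SimpleGraph V) : ℕ :=
  sInf {m | HasTotalColoring G m}



private def Aeven (n : ℕ) (a : Fin n) : Option (ZMod (n-1)) :=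
  if a.1 < n-1 then some ((a.1 : ℕ) : ZMod (n-1)) else none

private def Beven (n : ℕ) [NeZero (n-1)] : Option (ZMod (n-1)) → Fin n
  | some z => ⟨z.val, lt_of_lt_of_le (ZMod.val_lt z) (Nat.sub_le n 1)⟩
  | none => ⟨n-1, by have := Nat.pos_of_ne_zero (NeZero.ne (n-1)); omega⟩

private def coreL (n : ℕ) (c : ZMod (n-1)) :
    Option (ZMod (n-1)) → Option (ZMod (n-1)) → Option (ZMod (n-1))
  | some x, some y => if y = x + 1 then none else some ((x+y)*c)
  | some x, none => some ((2*x+1)*c)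
  | none, some y => some ((2*y-1)*c)
  | none, none => none

private lemma Aeven_inj (n : ℕ) [NeZero (n-1)] : Function.Injective (Aeven n) := by
  intro a b h
  unfold Aeven at h
  by_cases h1 : a.1 < n-1 <;> by_cases h2 : b.1 < n-1
  · rw [if_pos h1, if_pos h2] at h
    have := congrArg ZMod.val (Option.some.inj h)
    rw [ZMod.val_cast_of_lt h1, ZMod.val_cast_of_lt h2] at this
    exact Fin.ext this
  · rw [if_pos h1, if_neg h2] at h; exact absurd h (by simp)
  · rw [if_neg h1, if_pos h2] at h; exact absurd h (by simp)
  · have := a.2; have := b.2; exact Fin.ext (by omega)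

private lemma Beven_inj (n : ℕ) [NeZero (n-1)] : Function.Injective (Beven n) := by
  intro z w h
  cases z with
  | some z =>
    cases w with
    | some w =>
      simp only [Beven, Fin.mk.injEq] at h
      exact congrArg some (ZMod.val_injective (n-1) h)
    | none =>
      simp only [Beven, Fin.mk.injEq] at h
      have := ZMod.val_lt z; omega
  | none =>
    cases w with
    | some w =>
      simp only [Beven, Fin.mk.injEq] at h
      have := ZMod.val_lt w; omega
    | none => rfl

section core
variable {n : ℕ} {c : ZMod (n-1)}

private lemma hcc (hc : (2 : ZMod (n-1)) * c = 1) {z w : ZMod (n-1)} (h : z * c = w * c) :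
    z = w := by
  have h2 : z * (c * 2) = w * (c * 2) := by rw [← mul_assoc, ← mul_assoc, h]
  rwa [mul_comm c 2, hc, mul_one, mul_one] at h2

private lemma h2i (hc : (2 : ZMod (n-1)) * c = 1) {z w : ZMod (n-1)} (h : 2*z = 2*w) :
    z = w := by
  have h2 := congrArg (fun t => c * t) h
  simp only [← mul_assoc, mul_comm c 2, hc, one_mul] at h2
  exact h2

private lemma hxx (hc : (2 : ZMod (n-1)) * c = 1) (x : ZMod (n-1)) : (x + x) * c = x := by
  have h : (x + x) * c = x * (2 * c) := by ring
  rw [h, hc, mul_one]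

private lemma core_row (hc : (2 : ZMod (n-1)) * c = 1) (oa : Option (ZMod (n-1))) :
    Function.Injective (coreL n c oa) := by
  intro ob ob' h
  cases oa with
  | some x =>
    cases ob with
    | some y =>
      cases ob' with
      | some y' =>
        simp only [coreL] at h
        by_cases hy : y = x + 1
        · by_cases hy' : y' = x + 1
          · rw [hy, hy']
          · rw [if_pos hy, if_neg hy'] at h; exact absurd h (by simp)
        · by_cases hy' : y' = x + 1
          · rw [if_neg hy, if_pos hy'] at h; exact absurd h (by simp)
          · rw [if_neg hy, if_neg hy'] at h
            exact congrArg some (add_left_cancel (hcc hc (Option.some.inj h)))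
      | none =>
        simp only [coreL] at h
        by_cases hy : y = x + 1
        · rw [if_pos hy] at h; exact absurd h (by simp)
        · rw [if_neg hy] at h
          exfalso
          have h' := hcc hc (Option.some.inj h)
          apply hy
          have h2 : x + y = x + (x + 1) := by rw [h']; ring
          exact add_left_cancel h2
    | none =>
      cases ob' with
      | some y' =>
        simp only [coreL] at h
        by_cases hy : y' = x + 1
        · rw [if_pos hy] at h; exact absurd h (by simp)
        · rw [if_neg hy] at h
          exfalso
          have h' := hcc hc (Option.some.inj h)
          apply hy
          have h2 : x + y' = x + (x + 1) := by rw [← h']; ring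
          exact add_left_cancel h2
      | none => rfl
  | none =>
    cases ob with
    | some y =>
      cases ob' with
      | some y' =>
        simp only [coreL] at h
        have h' := hcc hc (Option.some.inj h)
        have h2 : (2:ZMod (n-1))*y = 2*y' := sub_left_inj.mp h'
        exact congrArg some (h2i hc h2)
      | none => exact absurd h (by simp [coreL])
    | none =>
      cases ob' with
      | some y' => exact absurd h (by simp [coreL])
      | none => rfl

private lemma core_col (hc : (2 : ZMod (n-1)) * c = 1) (ob : Option (ZMod (n-1))) :
    Function.Injective (fun oa => coreL n c oa ob) := by
  intro oa oa' h
  dsimp only at h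
  cases ob with
  | some y =>
    cases oa with
    | some x =>
      cases oa' with
      | some x' =>
        simp only [coreL] at h
        by_cases hy : y = x + 1
        · by_cases hy' : y = x' + 1
          · have h2 : x + 1 = x' + 1 := by rw [← hy, ← hy']
            exact congrArg some (add_right_cancel h2)
          · rw [if_pos hy, if_neg hy'] at h; exact absurd h (by simp)
        · by_cases hy' : y = x' + 1
          · rw [if_neg hy, if_pos hy'] at h; exact absurd h (by simp)
          · rw [if_neg hy, if_neg hy'] at h
            exact congrArg some (add_right_cancel (hcc hc (Option.some.inj h)))
      | none =>
        simp only [coreL] at h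
        by_cases hy : y = x + 1
        · rw [if_pos hy] at h; exact absurd h (by simp)
        · rw [if_neg hy] at h
          exfalso
          have h' := hcc hc (Option.some.inj h)
          apply hy
          have h2 : x + y = (y - 1) + y := by rw [h']; ring
          have hx : x = y - 1 := add_right_cancel h2
          rw [hx]; ring
    | none =>
      cases oa' with
      | some x' =>
        simp only [coreL] at h
        by_cases hy : y = x' + 1
        · rw [if_pos hy] at h; exact absurd h (by simp)
        · rw [if_neg hy] at h
          exfalso
          have h' := hcc hc (Option.some.inj h)
          apply hy
          have h2 : x' + y = (y - 1) + y := by rw [← h']; ring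
          have hx : x' = y - 1 := add_right_cancel h2
          rw [hx]; ring
      | none => rfl
  | none =>
    cases oa with
    | some x =>
      cases oa' with
      | some x' =>
        simp only [coreL] at h
        have h' := hcc hc (Option.some.inj h)
        have h2 : (2:ZMod (n-1))*x = 2*x' := add_right_cancel h'
        exact congrArg some (h2i hc h2)
      | none => exact absurd h (by simp [coreL])
    | none =>
      cases oa' with
      | some x' => exact absurd h (by simp [coreL])
      | none => rfl

private lemma core_diag [Fact (1 < n-1)] (hc : (2 : ZMod (n-1)) * c = 1)
    (oa : Option (ZMod (n-1))) : coreL n c oa oa = oa := by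
  cases oa with
  | some x =>
    simp only [coreL]
    rw [if_neg (fun h => one_ne_zero (left_eq_add.mp h)), hxx hc]
  | none => rfl

end core

private lemma exists_goodL (n : ℕ) (hn : 2 < n) :
    ∃ L : Fin n → Fin n → Fin n,
      (∀ a, Function.Injective (L a)) ∧ (∀ b, Function.Injective (fun a => L a b)) ∧
      Function.Injective (fun a : Fin n => L a a) := by
  rcases Nat.even_or_odd n with he | ho
  · -- even case
    have h4 : 4 ≤ n := by rcases he with ⟨k, hk⟩; omega
    haveI : NeZero (n-1) := ⟨by omega⟩
    haveI : Fact (1 < n-1) := ⟨by omega⟩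
    set c : ZMod (n-1) := ((n/2 : ℕ) : ZMod (n-1)) with hcdef
    have hc : (2 : ZMod (n-1)) * c = 1 := by
      have h2 : 2 * (n/2) = n := Nat.two_mul_div_two_of_even he
      have hn1 : (n : ℕ) = (n-1) + 1 := by omega
      calc (2 : ZMod (n-1)) * c = ((2 * (n/2) : ℕ) : ZMod (n-1)) := by rw [hcdef]; push_cast; ring
        _ = ((n : ℕ) : ZMod (n-1)) := by rw [h2]
        _ = (((n-1) + 1 : ℕ) : ZMod (n-1)) := by rw [← hn1]
        _ = 1 := by push_cast [ZMod.natCast_self]; ring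
    refine ⟨fun a b => Beven n (coreL n c (Aeven n a) (Aeven n b)), ?_, ?_, ?_⟩
    · intro a b b' h
      exact Aeven_inj n (core_row hc _ (Beven_inj n h))
    · intro b a a' h
      exact Aeven_inj n (core_col hc _ (Beven_inj n h))
    · intro a a' h
      dsimp only at h
      rw [core_diag hc, core_diag hc] at h
      exact Aeven_inj n (Beven_inj n h)
  · -- odd case
    haveI : NeZero n := ⟨by omega⟩
    set c : ZMod n := (((n+1)/2 : ℕ) : ZMod n) with hcdef
    have hc : (2 : ZMod n) * c = 1 := by
      have h2 : 2 * ((n+1)/2) = n + 1 := Nat.two_mul_div_two_of_even (by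
        rcases ho with ⟨k, hk⟩; exact ⟨k+1, by omega⟩)
      calc (2 : ZMod n) * c = ((2 * ((n+1)/2) : ℕ) : ZMod n) := by rw [hcdef]; push_cast; ring
        _ = ((n + 1 : ℕ) : ZMod n) := by rw [h2]
        _ = 1 := by push_cast [ZMod.natCast_self]; ring
    have hccn : ∀ z w : ZMod n, z * c = w * c → z = w := by
      intro z w h
      have h2 : z * (c * 2) = w * (c * 2) := by rw [← mul_assoc, ← mul_assoc, h]
      rwa [mul_comm c 2, hc, mul_one, mul_one] at h2
    have hxxn : ∀ x : ZMod n, (x + x) * c = x := by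
      intro x
      have h : (x + x) * c = x * (2 * c) := by ring
      rw [h, hc, mul_one]
    have hA : Function.Injective (fun a : Fin n => ((a.1 : ℕ) : ZMod n)) := by
      intro a b h
      dsimp only at h
      have := congrArg ZMod.val h
      rw [ZMod.val_cast_of_lt a.2, ZMod.val_cast_of_lt b.2] at this
      exact Fin.ext this
    have hB : Function.Injective (fun z : ZMod n => (⟨z.val, ZMod.val_lt z⟩ : Fin n)) := by
      intro z w h
      exact ZMod.val_injective n (congrArg Fin.val h)
    refine ⟨fun a b => ⟨((((a.1 : ℕ) : ZMod n) + ((b.1 : ℕ) : ZMod n)) * c).val, ZMod.val_lt _⟩,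
      ?_, ?_, ?_⟩
    · intro a b b' h
      exact hA (add_left_cancel (hccn _ _ (hB h)))
    · intro b a a' h
      exact hA (add_right_cancel (hccn _ _ (hB h)))
    · intro a a' h
      have h' : (((a.1 : ℕ) : ZMod n) + ((a.1 : ℕ) : ZMod n)) * c
          = (((a'.1 : ℕ) : ZMod n) + ((a'.1 : ℕ) : ZMod n)) * c := hB h
      rw [hxxn, hxxn] at h'
      exact hA h'
-- ===== aux =====
open Equiv Equiv.Perm

private lemma cayley_adj_iff {n : ℕ} (h0 : 0 < n) {x y : Equiv.Perm (Fin n)} :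
    (cayley (Tm n h0)).Adj x y ↔
      ∃ k : Fin n, k ≠ ⟨0, h0⟩ ∧ y = x * Equiv.swap ⟨0, h0⟩ k := by
  constructor
  · rintro ⟨hne, h | h⟩
    · obtain ⟨k, hk, hs⟩ := h
      exact ⟨k, hk, by rw [← hs, mul_inv_cancel_left]⟩
    · obtain ⟨k, hk, hs⟩ := h
      refine ⟨k, hk, ?_⟩
      have hx : x = y * Equiv.swap ⟨0, h0⟩ k := by rw [← hs, mul_inv_cancel_left]
      rw [hx, mul_assoc]
      have : Equiv.swap ⟨0, h0⟩ k * Equiv.swap ⟨0, h0⟩ k = 1 := by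
        rw [Equiv.swap_mul_self]
      rw [this, mul_one]
  · rintro ⟨k, hk, rfl⟩
    have hs1 : Equiv.swap ⟨0, h0⟩ k ≠ 1 := by
      intro h
      apply hk
      have := congrArg (fun (e : Equiv.Perm (Fin n)) => e ⟨0, h0⟩) h
      simpa [Equiv.swap_apply_left] using this
    refine ⟨?_, Or.inl ⟨k, hk, by rw [inv_mul_cancel_left]⟩⟩
    intro h
    exact hs1 (left_eq_mul.mp h)

private lemma adj_val_ne {n : ℕ} (h0 : 0 < n) {x y : Equiv.Perm (Fin n)}
    (h : (cayley (Tm n h0)).Adj x y) : x ⟨0, h0⟩ ≠ y ⟨0, h0⟩ := by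
  obtain ⟨k, hk, rfl⟩ := (cayley_adj_iff h0).mp h
  have hy : (x * Equiv.swap ⟨0, h0⟩ k) ⟨0, h0⟩ = x k := by
    simp [Equiv.Perm.mul_apply, Equiv.swap_apply_left]
  rw [hy]
  exact fun hxy => hk (x.injective hxy).symm

private lemma adj_sign {n : ℕ} (h0 : 0 < n) {x y : Equiv.Perm (Fin n)}
    (h : (cayley (Tm n h0)).Adj x y) :
    Equiv.Perm.sign y = - Equiv.Perm.sign x := by
  obtain ⟨k, hk, rfl⟩ := (cayley_adj_iff h0).mp h
  rw [map_mul, Equiv.Perm.sign_swap (Ne.symm hk), mul_neg_one]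

private lemma two_neighbors_val_ne {n : ℕ} (h0 : 0 < n) {v x y : Equiv.Perm (Fin n)}
    (hx : (cayley (Tm n h0)).Adj v x) (hy : (cayley (Tm n h0)).Adj v y) (hxy : x ≠ y) :
    x ⟨0, h0⟩ ≠ y ⟨0, h0⟩ := by
  obtain ⟨k, hk, rfl⟩ := (cayley_adj_iff h0).mp hx
  obtain ⟨j, hj, rfl⟩ := (cayley_adj_iff h0).mp hy
  have h1 : (v * Equiv.swap ⟨0, h0⟩ k) ⟨0, h0⟩ = v k := by
    simp [Equiv.Perm.mul_apply, Equiv.swap_apply_left]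
  have h2 : (v * Equiv.swap ⟨0, h0⟩ j) ⟨0, h0⟩ = v j := by
    simp [Equiv.Perm.mul_apply, Equiv.swap_apply_left]
  rw [h1, h2]
  intro hvv
  exact hxy (by rw [v.injective hvv])

open scoped Classical in
private noncomputable def eCol {n : ℕ} (h0 : 0 < n) (L : Fin n → Fin n → Fin n)
    (x y : Equiv.Perm (Fin n)) : Fin n :=
  if Equiv.Perm.sign x = 1 ∧ ¬ Equiv.Perm.sign y = 1 then L (x ⟨0, h0⟩) (y ⟨0, h0⟩)
  else if Equiv.Perm.sign y = 1 ∧ ¬ Equiv.Perm.sign x = 1 then L (y ⟨0, h0⟩) (x ⟨0, h0⟩)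
  else L ⟨0, h0⟩ ⟨0, h0⟩

private lemma eCol_symm {n : ℕ} (h0 : 0 < n) (L : Fin n → Fin n → Fin n)
    (x y : Equiv.Perm (Fin n)) : eCol h0 L x y = eCol h0 L y x := by
  classical
  unfold eCol
  by_cases h1 : Equiv.Perm.sign x = 1 <;> by_cases h2 : Equiv.Perm.sign y = 1 <;>
    simp [h1, h2]



private lemma eCol_eval_even {n : ℕ} (h0 : 0 < n) (L : Fin n → Fin n → Fin n)
    {x y : Equiv.Perm (Fin n)} (hsx : Equiv.Perm.sign x = 1) (hsy : ¬ Equiv.Perm.sign y = 1) :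
    eCol h0 L x y = L (x ⟨0, h0⟩) (y ⟨0, h0⟩) := by
  unfold eCol
  rw [if_pos ⟨hsx, hsy⟩]

private lemma eCol_eval_odd {n : ℕ} (h0 : 0 < n) (L : Fin n → Fin n → Fin n)
    {x y : Equiv.Perm (Fin n)} (hsx : ¬ Equiv.Perm.sign x = 1) (hsy : Equiv.Perm.sign y = 1) :
    eCol h0 L x y = L (y ⟨0, h0⟩) (x ⟨0, h0⟩) := by
  unfold eCol
  rw [if_neg (fun hc => hsx hc.1), if_pos ⟨hsy, hsx⟩]

private lemma eCol_shared {n : ℕ} (h0 : 0 < n) {L : Fin n → Fin n → Fin n}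
    (hrow : ∀ a, Function.Injective (L a))
    (hcol : ∀ b, Function.Injective (fun a => L a b))
    {v x y : Equiv.Perm (Fin n)}
    (hx : (cayley (Tm n h0)).Adj v x) (hy : (cayley (Tm n h0)).Adj v y) (hxy : x ≠ y) :
    eCol h0 L v x ≠ eCol h0 L v y := by
  have hvne := two_neighbors_val_ne h0 hx hy hxy
  rcases Int.units_eq_one_or (Equiv.Perm.sign v) with hv1 | hv1
  · have hsx : ¬ Equiv.Perm.sign x = 1 := by rw [adj_sign h0 hx, hv1]; decide
    have hsy : ¬ Equiv.Perm.sign y = 1 := by rw [adj_sign h0 hy, hv1]; decide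
    rw [eCol_eval_even h0 L hv1 hsx, eCol_eval_even h0 L hv1 hsy]
    exact fun h => hvne (hrow _ h)
  · have hv1' : ¬ Equiv.Perm.sign v = 1 := by rw [hv1]; decide
    have hsx : Equiv.Perm.sign x = 1 := by rw [adj_sign h0 hx, hv1]; decide
    have hsy : Equiv.Perm.sign y = 1 := by rw [adj_sign h0 hy, hv1]; decide
    rw [eCol_eval_odd h0 L hv1' hsx, eCol_eval_odd h0 L hv1' hsy]
    exact fun h => hvne (hcol _ h)

private lemma upperBound (n : ℕ) (hn : 2 < n) (h0 : 0 < n) :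
    HasTotalColoring (cayley (Tm n h0)) n := by
  classical
  obtain ⟨L, hrow, hcol, hdiag⟩ := exists_goodL n hn
  refine ⟨fun x => L (x ⟨0, h0⟩) (x ⟨0, h0⟩), Sym2.lift ⟨eCol h0 L, eCol_symm h0 L⟩,
    ?_, ?_, ?_⟩
  · intro x y hadj h
    exact adj_val_ne h0 hadj (hdiag h)
  · intro e he v hv
    induction e using Sym2.ind with
    | _ x y =>
      have hadj : (cayley (Tm n h0)).Adj x y := (SimpleGraph.mem_edgeSet _).mp he
      have hvne := adj_val_ne h0 hadj
      rcases Int.units_eq_one_or (Equiv.Perm.sign x) with hsx | hsx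
      · have hsy : ¬ Equiv.Perm.sign y = 1 := by rw [adj_sign h0 hadj, hsx]; decide
        rcases Sym2.mem_iff.mp hv with h' | h'
        · rw [h']
          show eCol h0 L x y ≠ L (x ⟨0, h0⟩) (x ⟨0, h0⟩)
          rw [eCol_eval_even h0 L hsx hsy]
          exact fun h => hvne (hrow _ h).symm
        · rw [h']
          show eCol h0 L x y ≠ L (y ⟨0, h0⟩) (y ⟨0, h0⟩)
          rw [eCol_eval_even h0 L hsx hsy]
          exact fun h => hvne (hcol _ h)
      · have hsx1 : ¬ Equiv.Perm.sign x = 1 := by rw [hsx]; decide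
        have hsy : Equiv.Perm.sign y = 1 := by rw [adj_sign h0 hadj, hsx]; decide
        rcases Sym2.mem_iff.mp hv with h' | h'
        · rw [h']
          show eCol h0 L x y ≠ L (x ⟨0, h0⟩) (x ⟨0, h0⟩)
          rw [eCol_eval_odd h0 L hsx1 hsy]
          exact fun h => hvne (hcol _ h).symm
        · rw [h']
          show eCol h0 L x y ≠ L (y ⟨0, h0⟩) (y ⟨0, h0⟩)
          rw [eCol_eval_odd h0 L hsx1 hsy]
          exact fun h => hvne (hrow _ h)
  · intro e he f hf hef hshare
    obtain ⟨v, hve, hvf⟩ := hshare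
    have hgen : ∀ e' ∈ (cayley (Tm n h0)).edgeSet, v ∈ e' →
        ∃ x, e' = s(v, x) ∧ (cayley (Tm n h0)).Adj v x := by
      intro e' he' hv'
      induction e' using Sym2.ind with
      | _ a b =>
        have hadj : (cayley (Tm n h0)).Adj a b := (SimpleGraph.mem_edgeSet _).mp he'
        rcases Sym2.mem_iff.mp hv' with rfl | rfl
        · exact ⟨b, rfl, hadj⟩
        · exact ⟨a, Sym2.eq_swap, hadj.symm⟩
    obtain ⟨x, rfl, hvx⟩ := hgen e he hve
    obtain ⟨y, rfl, hvy⟩ := hgen f hf hvf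
    have hxy : x ≠ y := fun h => hef (by rw [h])
    show eCol h0 L v x ≠ eCol h0 L v y
    exact eCol_shared h0 hrow hcol hvx hvy hxy

private lemma lowerBound (n : ℕ) (hn : 2 < n) (h0 : 0 < n) (m : ℕ)
    (hm : HasTotalColoring (cayley (Tm n h0)) m) : n ≤ m := by
  classical
  obtain ⟨cv, ce, _, h2, h3⟩ := hm
  have hadjk : ∀ k : Fin n, k ≠ ⟨0, h0⟩ →
      (cayley (Tm n h0)).Adj 1 (Equiv.swap ⟨0, h0⟩ k) := by
    intro k hk
    exact (cayley_adj_iff h0).mpr ⟨k, hk, (one_mul _).symm⟩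
  have hmem : ∀ k : Fin n, k ≠ ⟨0, h0⟩ →
      s(1, Equiv.swap ⟨0, h0⟩ k) ∈ (cayley (Tm n h0)).edgeSet := by
    intro k hk
    exact (SimpleGraph.mem_edgeSet _).mpr (hadjk k hk)
  have hswap_inj : ∀ a b : Fin n, a ≠ ⟨0, h0⟩ → b ≠ ⟨0, h0⟩ →
      Equiv.swap ⟨0, h0⟩ a = Equiv.swap ⟨0, h0⟩ b → a = b := by
    intro a b _ _ h
    have := congrArg (fun (e : Equiv.Perm (Fin n)) => e ⟨0, h0⟩) h
    simpa [Equiv.swap_apply_left] using this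
  set F : Fin n → Fin m := fun k =>
    if k = ⟨0, h0⟩ then cv 1 else ce s(1, Equiv.swap ⟨0, h0⟩ k) with hF
  have hinj : Function.Injective F := by
    intro a b hab
    by_contra hne
    by_cases ha : a = ⟨0, h0⟩
    · have hb : b ≠ ⟨0, h0⟩ := fun h => hne (by rw [ha, h])
      rw [hF] at hab
      simp only [if_pos ha, if_neg hb] at hab
      exact h2 _ (hmem b hb) 1 (Sym2.mem_mk_left _ _) hab.symm
    · by_cases hb : b = ⟨0, h0⟩
      · rw [hF] at hab
        simp only [if_neg ha, if_pos hb] at hab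
        exact h2 _ (hmem a ha) 1 (Sym2.mem_mk_left _ _) hab
      · rw [hF] at hab
        simp only [if_neg ha, if_neg hb] at hab
        have hne' : s(1, Equiv.swap ⟨0, h0⟩ a) ≠ s((1 : Equiv.Perm (Fin n)), Equiv.swap ⟨0, h0⟩ b) := by
          intro h
          exact hne (hswap_inj a b ha hb (Sym2.congr_right.mp h))
        exact h3 _ (hmem a ha) _ (hmem b hb) hne'
          ⟨1, Sym2.mem_mk_left _ _, Sym2.mem_mk_left _ _⟩ hab
  calc n = Fintype.card (Fin n) := (Fintype.card_fin n).symm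
    _ ≤ Fintype.card (Fin m) := Fintype.card_le_of_injective F hinj
    _ = m := Fintype.card_fin m


/-- For `n > 2`, the total chromatic number of the Cayley graph on the symmetric group
`S_n` with respect to `T_m = {(1 2), …, (1 n)}` equals `n`. -/
theorem totalChromaticNumber_cayley_symmetricGroup_Tm (n : ℕ) (hn : 2 < n) :
    totalChromaticNumber (cayley (Tm n (by omega))) = n := by
  have h0 : 0 < n := by omega
  have hup : HasTotalColoring (cayley (Tm n h0)) n := upperBound n hn h0
  apply le_antisymm
  · exact Nat.sInf_le hup
  · exact le_csInf ⟨n, hup⟩ (fun m hm => lowerBound n hn h0 m hm)
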